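/- Let h : ℝ → ℝ be differentiable and let P : ℝ → ℝ³ be differentiable with ‖P(t)‖ = 1 for all t. Then the curve c(t) = e^{h(t)} · P(t) satisfies ‖c'(t)‖² = e^{2 h(t)} · (h'(t)² + ‖P'(t)‖²) for all t. -/

import Mathlib

/-!
A curve `P` of constant norm is orthogonal to its velocity, so the velocity
`(e^h)' • P + e^h • P'` of `e^h • P` is a sum of two orthogonal vectors and Pythagoras applies.
-/

open Real
open scoped InnerProductSpace

section ConstantNorm

variable {F : Type*} [NormedAddCommGroup F] [InnerProductSpace ℝ F]

theorem HasDerivAt.inner_eq_zero_of_norm_const {f : ℝ → F} {f' : F} {t r : ℝ}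
    (hf : HasDerivAt f f' t) (hr : ∀ s, ‖f s‖ = r) : ⟪f t, f'⟫_ℝ = 0 := by
  have hconst : HasDerivAt (‖f ·‖ ^ 2) 0 t := by
    simpa only [hr] using hasDerivAt_const t (r ^ 2)
  simpa using hf.norm_sq.unique hconst

theorem norm_deriv_smul_sq_of_norm_const {a : ℝ → ℝ} {f : ℝ → F} {a' : ℝ} {f' : F}
    {t r : ℝ} (ha : HasDerivAt a a' t) (hf : HasDerivAt f f' t) (hr : ∀ s, ‖f s‖ = r) :
    ‖deriv (fun s => a s • f s) t‖ ^ 2 = a' ^ 2 * r ^ 2 + a t ^ 2 * ‖f'‖ ^ 2 := by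
  have horth : ⟪a t • f', a' • f t⟫_ℝ = 0 := by
    rw [real_inner_smul_left, real_inner_smul_right, real_inner_comm,
      hf.inner_eq_zero_of_norm_const hr, mul_zero, mul_zero]
  rw [(ha.fun_smul hf).deriv, norm_add_sq_real, horth, norm_smul, norm_smul, hr,
    Real.norm_eq_abs, Real.norm_eq_abs, mul_pow, mul_pow, sq_abs, sq_abs]
  ring

end ConstantNorm

theorem norm_deriv_exp_smul_sphere (h : ℝ → ℝ) (P : ℝ → EuclideanSpace ℝ (Fin 3))
    (hh : Differentiable ℝ h) (hP : Differentiable ℝ P)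
    (hPnorm : ∀ t, ‖P t‖ = 1) :
    ∀ t : ℝ, ‖deriv (fun s => Real.exp (h s) • P s) t‖ ^ 2 =
      Real.exp (2 * h t) * ((deriv h t) ^ 2 + ‖deriv P t‖ ^ 2) := by
  intro t
  have hexp : HasDerivAt (fun s => exp (h s)) (exp (h t) * deriv h t) t :=
    (hh t).hasDerivAt.exp
  rw [norm_deriv_smul_sq_of_norm_const hexp (hP t).hasDerivAt hPnorm,
    two_mul, exp_add]
  ring
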